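/- Let x₀ ∈ ℝ^d be nonzero with support T, let C = { sgn(x₀) + u : u ∈ ℝ^d, supp u ∩ T = ∅, ‖u‖_∞ ≤ 1 } be the subdifferential of the ℓ1-norm at x₀, let (S_i)_{i=1}^k be a partition of {1,…,d}, and for v ∈ ℝ_+^k let Δ^v = diag(Σ_{i=1}^k v_i 1_{S_i}). Then for all v₁, v₂ ∈ ℝ_+^k and θ ∈ [0,1], θ·Δ^{v₁}C + (1−θ)·Δ^{v₂}C ⊆ Δ^{θv₁+(1−θ)v₂}C (Minkowski sum of the scaled image sets). -/

import Mathlib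

open MeasureTheory ProbabilityTheory
open scoped Pointwise BigOperators

noncomputable section

/-- The diagonal entries of `Δ^v = diag(∑ i, v i • 𝟏_{S i})`. -/
def blockWeight {d k : ℕ} (S : Fin k → Finset (Fin d)) (v : Fin k → ℝ) (j : Fin d) : ℝ :=
  ∑ i, if j ∈ S i then v i else 0

/-- The linear map given by the diagonal matrix `Δ^v`. -/
def deltaMap {d k : ℕ} (S : Fin k → Finset (Fin d)) (v : Fin k → ℝ)
    (p : EuclideanSpace ℝ (Fin d)) : EuclideanSpace ℝ (Fin d) :=
  WithLp.toLp 2 (fun j => blockWeight S v j * p j)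

/-- The sign vector of `x₀` (with `sgn 0 = 0`). -/
def sgnVec {d : ℕ} (x₀ : EuclideanSpace ℝ (Fin d)) : EuclideanSpace ℝ (Fin d) :=
  WithLp.toLp 2 (fun j => Real.sign (x₀ j))

/-- The subdifferential of the ℓ1-norm at `x₀`:
`C = { sgn x₀ + u : supp u ∩ supp x₀ = ∅, ‖u‖_∞ ≤ 1 }`. -/
def Cset {d : ℕ} (x₀ : EuclideanSpace ℝ (Fin d)) : Set (EuclideanSpace ℝ (Fin d)) :=
  {p | ∃ u : EuclideanSpace ℝ (Fin d),
    (∀ j, x₀ j ≠ 0 → u j = 0) ∧ (∀ j, |u j| ≤ 1) ∧ p = sgnVec x₀ + u}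

/-! `C` is the product of the convex sets `∂|·|(x₀ j)`, and `Δ^v` scales coordinate `j` by a
weight that is linear in `v` and nonnegative for `v ≥ 0`. The inclusion therefore reduces, one
coordinate at a time, to `a • I + b • I = (a + b) • I` for a convex `I ⊆ ℝ` and `a, b ≥ 0`. -/

def absSubdiff (t : ℝ) : Set ℝ :=
  if t = 0 then Set.Icc (-1) 1 else {Real.sign t}

lemma convex_absSubdiff (t : ℝ) : Convex ℝ (absSubdiff t) := by
  unfold absSubdiff
  split_ifs
  · exact convex_Icc _ _
  · exact convex_singleton _

lemma mem_Cset_iff {d : ℕ} (x₀ p : EuclideanSpace ℝ (Fin d)) :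
    p ∈ Cset x₀ ↔ ∀ j, p j ∈ absSubdiff (x₀ j) := by
  constructor
  · rintro ⟨u, hu₀, hu₁, rfl⟩ j
    by_cases hj : x₀ j = 0
    · simpa [absSubdiff, sgnVec, hj, abs_le] using hu₁ j
    · simp [absSubdiff, sgnVec, hj, hu₀ j hj]
  · intro hp
    refine ⟨p - sgnVec x₀, fun j hj => ?_, fun j => ?_, by simp⟩
    · simpa [absSubdiff, sgnVec, hj, sub_eq_zero] using hp j
    · by_cases hj : x₀ j = 0
      · simpa [absSubdiff, sgnVec, hj, abs_le] using hp j
      · have hpj := hp j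
        simp_all [absSubdiff, sgnVec]

lemma mem_deltaMap_image_Cset_iff {d k : ℕ} (S : Fin k → Finset (Fin d)) (v : Fin k → ℝ)
    (x₀ z : EuclideanSpace ℝ (Fin d)) :
    z ∈ deltaMap S v '' Cset x₀ ↔ ∀ j, z j ∈ blockWeight S v j • absSubdiff (x₀ j) := by
  simp only [Set.mem_smul_set, smul_eq_mul]
  constructor
  · rintro ⟨p, hp, rfl⟩ j
    exact ⟨p j, (mem_Cset_iff x₀ p).1 hp j, rfl⟩
  · intro hz
    choose q hq hqz using hz
    refine ⟨WithLp.toLp 2 q, (mem_Cset_iff x₀ _).2 hq, ?_⟩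
    ext j
    exact hqz j

lemma blockWeight_add_smul {d k : ℕ} (S : Fin k → Finset (Fin d)) (v₁ v₂ : Fin k → ℝ)
    (a b : ℝ) (j : Fin d) :
    blockWeight S (a • v₁ + b • v₂) j = a * blockWeight S v₁ j + b * blockWeight S v₂ j := by
  simp only [blockWeight, Finset.mul_sum, ← Finset.sum_add_distrib]
  refine Finset.sum_congr rfl fun i _ => ?_
  split_ifs <;> simp

lemma blockWeight_nonneg {d k : ℕ} (S : Fin k → Finset (Fin d)) {v : Fin k → ℝ}
    (hv : ∀ i, 0 ≤ v i) (j : Fin d) : 0 ≤ blockWeight S v j :=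
  Finset.sum_nonneg fun i _ => by split_ifs <;> simp [hv i]

theorem convex_combination_of_scaled_images {d k : ℕ}
    (x₀ : EuclideanSpace ℝ (Fin d))
    (S : Fin k → Finset (Fin d))
    (v₁ v₂ : Fin k → ℝ) (hv₁ : ∀ i, 0 ≤ v₁ i) (hv₂ : ∀ i, 0 ≤ v₂ i)
    (θ : ℝ) (hθ : θ ∈ Set.Icc (0 : ℝ) 1) :
    θ • (deltaMap S v₁ '' Cset x₀) + (1 - θ) • (deltaMap S v₂ '' Cset x₀)
      ⊆ deltaMap S (θ • v₁ + (1 - θ) • v₂) '' Cset x₀ := by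
  obtain ⟨hθ₀, hθ₁⟩ := hθ
  rintro _ ⟨_, ⟨a, ha, rfl⟩, _, ⟨b, hb, rfl⟩, rfl⟩
  rw [mem_deltaMap_image_Cset_iff] at ha hb ⊢
  intro j
  rw [blockWeight_add_smul, (convex_absSubdiff _).add_smul
    (mul_nonneg hθ₀ (blockWeight_nonneg S hv₁ j))
    (mul_nonneg (sub_nonneg.2 hθ₁) (blockWeight_nonneg S hv₂ j)), mul_smul, mul_smul]
  exact Set.add_mem_add (Set.smul_mem_smul_set (ha j)) (Set.smul_mem_smul_set (hb j))
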